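/- arXiv:2101.01148 — 4 statements merged into one kernel-verified Lean document; each statement's English description precedes it below -/
import Mathlib

section
/- If φ: ℝ → ℂ is real analytic (given by a convergent power series around 0 on all of ℝ) and satisfies φ(x)+φ(y)+φ(z) = φ(a)+φ(b)+φ(c) for all real x,y,z,a,b,c with x+y+z = a+b+c and x²+y²+z² = a²+b²+c², then φ is a quadratic polynomial: φ(x) = Ax² + Bx + C for some constants A, B, C ∈ ℂ. -/
/-!
Rotating a triple `(a, b, c)` about the axis `(1, 1, 1)` preserves its sum and its sum of
squares, so `φ` summed over the rotated triple is constant in the angle. Differentiating at angle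
`0`, where the velocity of the triple is `(b - c, c - a, a - b) / √3`, gives
`(b - c) φ'(a) + (c - a) φ'(b) + (a - b) φ'(c) = 0`; with `(a, b, c) = (x, 1, 0)` this says that
`φ'` is affine, so `φ` is quadratic.
-/

open Real

/-- First coordinate of the rotation by angle `t` of `(a, b, c)` about the axis `(1, 1, 1)`;
the other two are `rotAboutDiagonal b c a t` and `rotAboutDiagonal c a b t`. -/
noncomputable def rotAboutDiagonal (a b c t : ℝ) : ℝ :=
  (a + b + c) / 3 + cos t * (a - (a + b + c) / 3) + sin t * ((b - c) / √3)

section rotAboutDiagonal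

variable (a b c : ℝ)

@[simp]
theorem rotAboutDiagonal_zero : rotAboutDiagonal a b c 0 = a := by
  simp [rotAboutDiagonal]

theorem hasDerivAt_rotAboutDiagonal_zero :
    HasDerivAt (rotAboutDiagonal a b c) ((b - c) / √3) 0 :=
  (((hasDerivAt_const 0 ((a + b + c) / 3)).add
    ((hasDerivAt_cos 0).mul_const (a - (a + b + c) / 3))).add
    ((hasDerivAt_sin 0).mul_const ((b - c) / √3))).congr_deriv (by simp)

theorem rotAboutDiagonal_cyclic_sum (t : ℝ) :
    rotAboutDiagonal a b c t + rotAboutDiagonal b c a t + rotAboutDiagonal c a b t =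
      a + b + c := by
  simp only [rotAboutDiagonal]
  ring

theorem rotAboutDiagonal_cyclic_sum_sq (t : ℝ) :
    rotAboutDiagonal a b c t ^ 2 + rotAboutDiagonal b c a t ^ 2 + rotAboutDiagonal c a b t ^ 2 =
      a ^ 2 + b ^ 2 + c ^ 2 := by
  have h3 : √3 ^ 2 = 3 := sq_sqrt (by norm_num)
  have hcs := cos_sq_add_sin_sq t
  simp only [rotAboutDiagonal]
  field_simp
  linear_combination (27 * (a ^ 2 + b ^ 2 + c ^ 2) - 9 * (a + b + c) ^ 2) * hcs +
    (3 * (a + b + c) ^ 2 - 9 * (a ^ 2 + b ^ 2 + c ^ 2)) * (1 - cos t ^ 2) * h3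

end rotAboutDiagonal

variable {E : Type*} [NormedAddCommGroup E] [NormedSpace ℝ E]

theorem cyclic_sub_smul_deriv_eq_zero {φ : ℝ → E} (hφ : Differentiable ℝ φ)
    (hfun : ∀ x y z a b c : ℝ, x + y + z = a + b + c →
      x ^ 2 + y ^ 2 + z ^ 2 = a ^ 2 + b ^ 2 + c ^ 2 →
      φ x + φ y + φ z = φ a + φ b + φ c) (a b c : ℝ) :
    (b - c) • deriv φ a + (c - a) • deriv φ b + (a - b) • deriv φ c = 0 := by
  have hcomp (a b c : ℝ) :
      HasDerivAt (fun t => φ (rotAboutDiagonal a b c t)) (((b - c) / √3) • deriv φ a) 0 := by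
    have hφa : HasDerivAt φ (deriv φ a) (rotAboutDiagonal a b c 0) := by
      simpa using (hφ a).hasDerivAt
    exact hφa.scomp 0 (hasDerivAt_rotAboutDiagonal_zero a b c)
  have hsum := (((hcomp a b c).add (hcomp b c a)).add (hcomp c a b)).congr_of_eventuallyEq
    (.of_forall fun t => (hfun _ _ _ _ _ _
      (rotAboutDiagonal_cyclic_sum a b c t) (rotAboutDiagonal_cyclic_sum_sq a b c t)).symm)
  have h := (hasDerivAt_const 0 (φ a + φ b + φ c)).unique hsum
  simp only [div_eq_inv_mul, mul_smul, ← smul_add] at h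
  exact (smul_eq_zero.1 h.symm).resolve_left (by positivity)

theorem eq_add_smul_sub_of_cyclic_sub_smul_eq_zero {f : ℝ → E}
    (h : ∀ a b c : ℝ, (b - c) • f a + (c - a) • f b + (a - b) • f c = 0) (x : ℝ) :
    f x = f 0 + x • (f 1 - f 0) := by
  linear_combination (norm := module) h x 1 0

theorem eq_add_smul_add_smul_of_hasDerivAt {f : ℝ → E} {A B : E}
    (hf : ∀ x, HasDerivAt f (B + x • A) x) (x : ℝ) :
    f x = f 0 + x • B + (x ^ 2 / 2) • A := by
  let g : ℝ → E := fun x => f 0 + x • B + (x ^ 2 / 2) • A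
  have hg (x : ℝ) : HasDerivAt g (B + x • A) x :=
    (((hasDerivAt_const x (f 0)).add ((hasDerivAt_id x).smul_const B)).add
      (((hasDerivAt_pow 2 x).div_const 2).smul_const A)).congr_deriv (by simp)
  have hfg (x : ℝ) : HasDerivAt (f - g) 0 x := by simpa using (hf x).sub (hg x)
  have := is_const_of_deriv_eq_zero (fun x => (hfg x).differentiableAt) (fun x => (hfg x).deriv) x 0
  simpa [g, sub_eq_zero] using this

theorem stmt_0 (φ : ℝ → ℂ) (p : FormalMultilinearSeries ℝ ℝ ℂ)
    (hφ : HasFPowerSeriesOnBall φ p 0 ⊤)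
    (hfun : ∀ x y z a b c : ℝ, x + y + z = a + b + c →
      x ^ 2 + y ^ 2 + z ^ 2 = a ^ 2 + b ^ 2 + c ^ 2 →
      φ x + φ y + φ z = φ a + φ b + φ c) :
    ∃ A B C : ℂ, ∀ x : ℝ, φ x = A * (x : ℂ) ^ 2 + B * (x : ℂ) + C := by
  have hdiff : Differentiable ℝ φ := fun x =>
    (hφ.analyticAt_of_mem (by simp)).differentiableAt
  have haff := eq_add_smul_sub_of_cyclic_sub_smul_eq_zero (cyclic_sub_smul_deriv_eq_zero hdiff hfun)
  refine ⟨(deriv φ 1 - deriv φ 0) / 2, deriv φ 0, φ 0, fun x => ?_⟩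
  rw [eq_add_smul_add_smul_of_hasDerivAt (f := φ) (fun y => haff y ▸ (hdiff y).hasDerivAt) x]
  simp only [Complex.real_smul]
  push_cast
  ring
end

section
/- If f: ℝ → ℂ is real analytic, nowhere vanishing, and satisfies f(x)f(y)f(z) = f(a)f(b)f(c) whenever x+y+z = a+b+c and x²+y²+z² = a²+b²+c², then f(x) = exp(Ax² + Bx + C) for some complex constants A, B, C. -/
/-!
When `a * b = x * y`, the triples `(x + y, a, b)` and `(x, y, a + b)` have the same sum and the
same sum of squares, so `f (x + y) * f 0 = f x * f y * S (x * y)` for a function `S` determined by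
`f`. Expanding `f (x + y + z) * f 0 ^ 2` in two ways gives
`S (x * y) * S ((x + y) * z) = S (y * z) * S (x * (y + z))`, and the substitution
`(x, y, z) = (s⁻¹, s * u, s * v)` with `s → 0` turns this into `S (u + v) = S u * S v`. Hence
`S p = exp (c * p)`, and `t ↦ f t * exp (-(c / 2) * t ^ 2) / f 0` is a differentiable solution of
Cauchy's exponential equation, i.e. `t ↦ exp (B * t)`.
-/

theorem exists_eq_exp_mul_of_map_add_eq_mul {g : ℝ → ℂ} (hg : Differentiable ℝ g)
    (hadd : ∀ x y, g (x + y) = g x * g y) (h0 : g 0 = 1) :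
    ∃ B : ℂ, ∀ x : ℝ, g x = Complex.exp (B * x) := by
  set B := deriv g 0
  have hg' : ∀ x, HasDerivAt g (g x * B) x := by
    intro x
    have hshift : HasDerivAt (fun t => g (t - x)) B x :=
      HasDerivAt.comp_sub_const x x (by rw [sub_self]; exact (hg 0).hasDerivAt)
    have hg_eq : (fun t => g x * g (t - x)) = g := funext fun t => by rw [← hadd, add_sub_cancel]
    simpa only [hg_eq] using hshift.const_mul (g x)
  have hconst : ∀ x : ℝ, HasDerivAt (fun t : ℝ => g t * Complex.exp (-(B * t))) 0 x := by
    intro x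
    have hexp : HasDerivAt (fun t : ℝ => Complex.exp (-(B * t))) (Complex.exp (-(B * x)) * -B) x :=
      ((Complex.ofRealCLM.hasDerivAt.const_mul B).neg.cexp).congr_deriv (by simp)
    exact ((hg' x).mul hexp).congr_deriv (by ring)
  refine ⟨B, fun x => ?_⟩
  have h := is_const_of_deriv_eq_zero (fun t => (hconst t).differentiableAt)
    (fun t => (hconst t).deriv) x 0
  simp only [h0, Complex.ofReal_zero, mul_zero, neg_zero, Complex.exp_zero, mul_one] at h
  rw [← mul_one (g x), ← Complex.exp_zero, ← neg_add_cancel (B * x), Complex.exp_add, ← mul_assoc,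
    h, one_mul]

section
variable {f S : ℝ → ℂ}

theorem exists_map_add_mul_map_zero_eq (hf : Differentiable ℝ f) (hne : ∀ x, f x ≠ 0)
    (hfun : ∀ x y z a b c : ℝ, x + y + z = a + b + c →
      x ^ 2 + y ^ 2 + z ^ 2 = a ^ 2 + b ^ 2 + c ^ 2 →
      f x * f y * f z = f a * f b * f c) :
    ∃ S : ℝ → ℂ, Differentiable ℝ S ∧ ∀ x y, f (x + y) * f 0 = f x * f y * S (x * y) := by
  refine ⟨fun p => f (p + 1) * f 0 / (f p * f 1), ?_, fun x y => ?_⟩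
  · exact ((hf.comp (differentiable_id.add_const 1)).mul_const _).div (hf.mul_const _)
      fun p => mul_ne_zero (hne p) (hne 1)
  · have h := hfun (x + y) (x * y) 1 x y (x * y + 1) (by ring) (by ring)
    rw [mul_div_assoc', eq_div_iff (mul_ne_zero (hne _) (hne 1))]
    linear_combination f 0 * h

theorem map_zero_eq_one_of_map_add_mul_map_zero (hne : ∀ x, f x ≠ 0)
    (hS : ∀ x y, f (x + y) * f 0 = f x * f y * S (x * y)) : S 0 = 1 := by
  have h := hS 0 0
  simp only [add_zero, mul_zero] at h
  exact (mul_eq_left₀ (mul_ne_zero (hne 0) (hne 0))).mp h.symm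

theorem map_mul_map_add_mul_eq_of_map_add_mul_map_zero (hne : ∀ x, f x ≠ 0)
    (hS : ∀ x y, f (x + y) * f 0 = f x * f y * S (x * y)) (x y z : ℝ) :
    S (x * y) * S ((x + y) * z) = S (y * z) * S (x * (y + z)) := by
  have hxyz : f x * f y * f z ≠ 0 := mul_ne_zero (mul_ne_zero (hne x) (hne y)) (hne z)
  have h := hS x (y + z)
  rw [← add_assoc] at h
  refine mul_left_cancel₀ hxyz ?_
  linear_combination (f x * S (x * (y + z))) * hS y z + f 0 * h
    - (f z * S ((x + y) * z)) * hS x y - f 0 * hS (x + y) z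

theorem map_add_eq_mul_of_map_add_mul_map_zero (hne : ∀ x, f x ≠ 0) (hSc : Continuous S)
    (hS : ∀ x y, f (x + y) * f 0 = f x * f y * S (x * y)) (u v : ℝ) :
    S (u + v) = S u * S v := by
  have hcont : Continuous fun s : ℝ => S u * S (v + s ^ 2 * (u * v)) := by fun_prop
  have hcont' : Continuous fun s : ℝ => S (s ^ 2 * (u * v)) * S (u + v) := by fun_prop
  have key := hcont.ext_on (dense_compl_singleton 0) hcont' fun s (hs : s ≠ 0) => by
    have h := map_mul_map_add_mul_eq_of_map_add_mul_map_zero hne hS s⁻¹ (s * u) (s * v)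
    convert h using 3 <;> field_simp
  have h0 := congrFun key 0
  simp only [ne_eq, OfNat.ofNat_ne_zero, not_false_eq_true, zero_pow, zero_mul, add_zero,
    map_zero_eq_one_of_map_add_mul_map_zero hne hS, one_mul] at h0
  exact h0.symm

theorem exists_eq_mul_exp_of_map_add_mul_map_zero (hf : Differentiable ℝ f) (hne : ∀ x, f x ≠ 0)
    {c : ℂ} (h : ∀ x y : ℝ, f (x + y) * f 0 = f x * f y * Complex.exp (c * (x * y : ℝ))) :
    ∃ B : ℂ, ∀ x : ℝ, f x = f 0 * Complex.exp (c / 2 * x ^ 2 + B * x) := by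
  set g : ℝ → ℂ := fun t => f t / f 0 * Complex.exp (-(c / 2 * t ^ 2))
  have hg : Differentiable ℝ g := by
    have hofReal : Differentiable ℝ fun t : ℝ => (t : ℂ) := Complex.ofRealCLM.differentiable
    fun_prop
  have hadd : ∀ x y, g (x + y) = g x * g y := by
    intro x y
    have hexp : Complex.exp (-(c / 2 * ((x + y : ℝ) : ℂ) ^ 2)) = Complex.exp (-(c / 2 * x ^ 2))
        * Complex.exp (-(c / 2 * y ^ 2)) * Complex.exp (-(c * (x * y : ℝ))) := by
      rw [← Complex.exp_add, ← Complex.exp_add]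
      congr 1
      push_cast
      ring
    simp only [g, hexp]
    field_simp [hne 0]
    rw [h x y, mul_assoc, ← Complex.exp_add, add_neg_cancel, Complex.exp_zero, mul_one]
  obtain ⟨B, hB⟩ := exists_eq_exp_mul_of_map_add_eq_mul hg hadd (by simp [g, hne 0])
  refine ⟨B, fun x => ?_⟩
  rw [Complex.exp_add, ← hB x]
  simp only [g]
  field_simp [hne 0]
  rw [mul_assoc, ← Complex.exp_add, add_neg_cancel, Complex.exp_zero, mul_one]

end

theorem stmt_1 (f : ℝ → ℂ) (hf : ∀ x : ℝ, AnalyticAt ℝ f x)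
    (hne : ∀ x : ℝ, f x ≠ 0)
    (hfun : ∀ x y z a b c : ℝ, x + y + z = a + b + c →
      x ^ 2 + y ^ 2 + z ^ 2 = a ^ 2 + b ^ 2 + c ^ 2 →
      f x * f y * f z = f a * f b * f c) :
    ∃ A B C : ℂ, ∀ x : ℝ,
      f x = Complex.exp (A * (x : ℂ) ^ 2 + B * (x : ℂ) + C) := by
  have hdiff : Differentiable ℝ f := fun x => (hf x).differentiableAt
  obtain ⟨S, hSdiff, hS⟩ := exists_map_add_mul_map_zero_eq hdiff hne hfun
  obtain ⟨c, hc⟩ := exists_eq_exp_mul_of_map_add_eq_mul hSdiff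
    (map_add_eq_mul_of_map_add_mul_map_zero hne hSdiff.continuous hS)
    (map_zero_eq_one_of_map_add_mul_map_zero hne hS)
  obtain ⟨B, hB⟩ := exists_eq_mul_exp_of_map_add_mul_map_zero hdiff hne fun x y => by
    rw [hS, hc]
  refine ⟨c / 2, B, Complex.log (f 0), fun x => ?_⟩
  rw [hB x, Complex.exp_add _ (Complex.log _), Complex.exp_log (hne 0), mul_comm]
end

section
/- For every integer k ≥ 3 and every real x ≠ 0, 2x^k + (-x)^k ≠ ((1+√5)/2 · x)^k + ((1-√5)/2 · x)^k. Equivalently, the quantity 2x^k + (-x)^k - (((1+√5)/2)x)^k - (((1-√5)/2)x)^k is nonzero. -/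
/-!
Both sides are multiples of `x ^ k`: the left one by `2 + (-1) ^ k ≤ 3`, the right one by the
Lucas number `φ ^ k + ψ ^ k = F (k - 1) + F (k + 1)`, which is at least `1 + 3 = 4` once `k ≥ 3`.
-/

open Real goldenRatio

theorem goldenRatio_pow_succ_add_goldenConj_pow_succ (n : ℕ) :
    φ ^ (n + 1) + ψ ^ (n + 1) = Nat.fib n + Nat.fib (n + 2) := by
  rw [← goldenRatio_mul_fib_succ_add_fib, ← goldenConj_mul_fib_succ_add_fib, Nat.fib_add_two]
  push_cast
  linear_combination (Nat.fib (n + 1) : ℝ) * goldenRatio_add_goldenConj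

theorem four_le_goldenRatio_pow_add_goldenConj_pow {k : ℕ} (hk : 3 ≤ k) :
    4 ≤ φ ^ k + ψ ^ k := by
  obtain ⟨n, rfl⟩ : ∃ n, k = n + 1 := ⟨k - 1, by omega⟩
  have h₁ : 1 ≤ Nat.fib n := Nat.fib_mono (show 2 ≤ n by omega)
  have h₃ : 3 ≤ Nat.fib (n + 2) := Nat.fib_mono (show 4 ≤ n + 2 by omega)
  rw [goldenRatio_pow_succ_add_goldenConj_pow_succ]
  exact_mod_cast Nat.add_le_add h₁ h₃

theorem stmt_5 (k : ℕ) (hk : 3 ≤ k) (x : ℝ) (hx : x ≠ 0) :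
    2 * x ^ k + (-x) ^ k ≠
      ((1 + Real.sqrt 5) / 2 * x) ^ k + ((1 - Real.sqrt 5) / 2 * x) ^ k := by
  intro h
  have hcoeff : 2 + (-1) ^ k = φ ^ k + ψ ^ k := by
    refine mul_right_cancel₀ (pow_ne_zero k hx) ?_
    rw [neg_pow, mul_pow, mul_pow] at h
    linear_combination h
  have hsign : (-1 : ℝ) ^ k ≤ 1 := by
    rcases neg_one_pow_eq_or ℝ k with hpm | hpm <;> linarith
  linarith [four_le_goldenRatio_pow_add_goldenConj_pow hk]
end

section
/- Suppose a power series φ(x) = Σ_{k≥0} c_k x^k with infinite radius of convergence satisfies Σ_{k≥3} c_k (a^k+b^k+c^k-d^k-e^k-g^k) = 0 for all real triples (a,b,c),(d,e,g) with a+b+c = d+e+g and a²+b²+c² = d²+e²+g². Then c_k = 0 for all k ≥ 3. -/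
/-!
Take `(a, b, c) = (x, -x, x)` and `(d, e, g) = (φx, ψx, 0)` with `φ, ψ = (1 ± √5)/2`: since
`φ + ψ = 1` and `φ² + ψ² = 3` the hypothesis applies, and it says that the entire power series
`∑_{k ≥ 3} cₖ (2 + (-1)ᵏ - φᵏ - ψᵏ) xᵏ` vanishes on `ℝ`. Hence all its coefficients vanish, and
`2 + (-1)ᵏ - φᵏ - ψᵏ ≤ 3 - (φ³ + ψ³) = -1` for `k ≥ 3`.
-/

open Filter Topology NNReal goldenRatio

theorem eq_zero_of_tsum_pow_smul_eq_zero {𝕜 E : Type*} [NontriviallyNormedField 𝕜]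
    [NormedAddCommGroup E] [NormedSpace 𝕜 E] [CompleteSpace E] {b : ℕ → E} {r : ℝ≥0}
    (hr : 0 < r) (hb : Summable fun n => ‖b n‖ * (r : ℝ) ^ n)
    (h : ∀ᶠ x in 𝓝 (0 : 𝕜), ∑' n, x ^ n • b n = 0) : b = 0 := by
  let p : FormalMultilinearSeries 𝕜 𝕜 E := fun n =>
    ContinuousMultilinearMap.mkPiRing 𝕜 (Fin n) (b n)
  have hrad : 0 < p.radius := lt_of_lt_of_le (by exact_mod_cast hr)
    (p.le_radius_of_summable (by simpa [p, ContinuousMultilinearMap.norm_mkPiRing] using hb))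
  have hsum : p.sum = fun x => ∑' n, x ^ n • b n := by
    funext x
    simp [FormalMultilinearSeries.sum, p, ContinuousMultilinearMap.mkPiRing_apply]
  have hp : p = 0 :=
    (p.hasFPowerSeriesOnBall hrad).hasFPowerSeriesAt.eq_zero_of_eventually (hsum ▸ h)
  funext n
  exact (ContinuousMultilinearMap.mkPiRing_eq_zero_iff _).1 (congrFun hp n)

-- `(a ^ k + b ^ k + c ^ k) - (d ^ k + e ^ k + g ^ k)` at `(1, -1, 1)` and `(φ, ψ, 0)`, for `k ≠ 0`.
noncomputable def powerSumGap (k : ℕ) : ℝ := 2 + (-1) ^ k - φ ^ k - ψ ^ k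

theorem powerSumGap_neg {k : ℕ} (hk : 3 ≤ k) : powerSumGap k < 0 := by
  have hψ : |ψ| < 1 := abs_lt.2 ⟨Real.neg_one_lt_goldenConj, Real.goldenConj_neg.trans one_pos⟩
  have hcube : φ ^ 3 + ψ ^ 3 = 4 := by
    linear_combination ((φ + ψ) ^ 2 + (φ + ψ) + 4) * Real.goldenRatio_add_goldenConj
      - 3 * (φ + ψ) * Real.goldenRatio_mul_goldenConj
  have hφk : φ ^ 3 ≤ φ ^ k := pow_le_pow_right₀ Real.one_lt_goldenRatio.le hk
  have hψk : |ψ| ^ k ≤ |ψ| ^ 3 := pow_le_pow_of_le_one (abs_nonneg _) hψ.le hk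
  have hψ3 : |ψ| ^ 3 = -ψ ^ 3 := by
    rw [abs_of_neg Real.goldenConj_neg]; ring
  have hψk' : -|ψ| ^ k ≤ ψ ^ k := by
    rw [← abs_pow]; exact neg_abs_le _
  have hsign : (-1 : ℝ) ^ k ≤ 1 := (le_abs_self _).trans (abs_neg_one_pow k).le
  unfold powerSumGap
  linarith

theorem abs_powerSumGap_le (k : ℕ) : |powerSumGap k| ≤ 3 + |φ| ^ k + |ψ| ^ k := by
  have h₁ := abs_sub (2 + (-1) ^ k - φ ^ k) (ψ ^ k)
  have h₂ := abs_sub (2 + (-1) ^ k) (φ ^ k)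
  have h₃ := abs_add_le (2 : ℝ) ((-1) ^ k)
  rw [abs_neg_one_pow, abs_two] at h₃
  rw [powerSumGap, ← abs_pow, ← abs_pow]
  linarith

theorem summable_norm_powerSumGap_mul {co : ℕ → ℂ}
    (hconv : ∀ x : ℝ, Summable fun k : ℕ => ‖co k‖ * |x| ^ k) (t : ℝ) :
    Summable fun k => ‖(powerSumGap k : ℂ) * co k‖ * |t| ^ k := by
  refine .of_nonneg_of_le (fun k => by positivity) (fun k => ?_)
    ((((hconv t).mul_left 3).add (hconv (φ * t))).add (hconv (ψ * t)))
  calc ‖(powerSumGap k : ℂ) * co k‖ * |t| ^ k = |powerSumGap k| * (‖co k‖ * |t| ^ k) := by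
        rw [norm_mul, Complex.norm_real, Real.norm_eq_abs, mul_assoc]
    _ ≤ (3 + |φ| ^ k + |ψ| ^ k) * (‖co k‖ * |t| ^ k) := by
        gcongr
        exact abs_powerSumGap_le k
    _ = 3 * (‖co k‖ * |t| ^ k) + ‖co k‖ * |φ * t| ^ k + ‖co k‖ * |ψ * t| ^ k := by
        rw [abs_mul, abs_mul, mul_pow, mul_pow]
        ring

theorem stmt_6 (co : ℕ → ℂ)
    (hconv : ∀ x : ℝ, Summable fun k : ℕ => ‖co k‖ * |x| ^ k)
    (hfun : ∀ a b c d e g : ℝ, a + b + c = d + e + g →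
      a ^ 2 + b ^ 2 + c ^ 2 = d ^ 2 + e ^ 2 + g ^ 2 →
      (∑' k : ℕ, if 3 ≤ k then
        co k * (((a : ℂ) ^ k + (b : ℂ) ^ k + (c : ℂ) ^ k) -
          ((d : ℂ) ^ k + (e : ℂ) ^ k + (g : ℂ) ^ k)) else 0) = 0) :
    ∀ k : ℕ, 3 ≤ k → co k = 0 := by
  have hzero : (fun k => if 3 ≤ k then (powerSumGap k : ℂ) * co k else 0) = 0 := by
    refine eq_zero_of_tsum_pow_smul_eq_zero (𝕜 := ℝ) (r := 1) one_pos ?_ (.of_forall fun x => ?_)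
    · refine .of_nonneg_of_le (fun k => by positivity) (fun k => ?_)
        (summable_norm_powerSumGap_mul hconv 1)
      split_ifs <;> simp [mul_nonneg]
    · refine (tsum_congr fun k => ?_).trans (hfun x (-x) x (φ * x) (ψ * x) 0
        (by linear_combination -x * Real.goldenRatio_add_goldenConj)
        (by linear_combination -x ^ 2 * ((φ + ψ + 1) * Real.goldenRatio_add_goldenConj
          - 2 * Real.goldenRatio_mul_goldenConj)))
      split_ifs with hk
      · simp only [Complex.real_smul, powerSumGap, Complex.ofReal_add, Complex.ofReal_sub,
          Complex.ofReal_mul, Complex.ofReal_pow, Complex.ofReal_neg, Complex.ofReal_one,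
          Complex.ofReal_ofNat, Complex.ofReal_zero, zero_pow (by omega : k ≠ 0)]
        ring
      · simp
  intro k hk
  simpa [hk, (powerSumGap_neg hk).ne] using congrFun hzero k
end
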